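/- arXiv:1512.07441 — 5 statements merged into one kernel-verified Lean document; each statement's English description precedes it below -/
import Mathlib

section
/- Let m ≥ 1 be an integer, b₁ > 0, b₂ > 0, and set x_i = (1/m)·arctan(b₁/b₂) + (i−1)·π/m for i = 1,...,2m. Then for every trigonometric polynomial q of degree at most m−1, (1/(2m)) · ∑_{i=1}^{2m} ( q(x_i) + b₁ sin(m x_i) + b₂ cos(m x_i) )² ≥ b₁² + b₂². -/
open Real Finset

/-!
At the nodes `x k = θ / m + k π / m`, with `θ = arctan (b₁ / b₂)` the phase of the signal,
we have `m x k = θ + k π`, so `b₁ sin (m x k) + b₂ cos (m x k) = (-1) ^ k √(b₁² + b₂²)`.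
The sign vector `(-1) ^ k` is orthogonal on these `2 m` nodes to every harmonic of frequency
`j < m`, since `(-1) ^ k e^{i j x k}` is a geometric progression whose ratio
`e^{i π (m + j) / m}` is a `2 m`-th root of unity different from `1`. Pythagoras then bounds
the mean square from below by the mean square of the signal, which is `b₁² + b₂²`.
-/

theorem IsPrimitiveRoot.sum_range_pow_pow_eq_zero {R : Type*} [CommRing R] [IsDomain R]
    {ζ : R} {N : ℕ} (hζ : IsPrimitiveRoot ζ N) {n : ℕ} (hn : ¬ N ∣ n) :
    ∑ k ∈ range N, (ζ ^ n) ^ k = 0 := by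
  have hne : ζ ^ n - 1 ≠ 0 := by rwa [sub_ne_zero, Ne, hζ.pow_eq_one_iff_dvd]
  have h := geom_sum_mul (ζ ^ n) N
  rw [pow_right_comm, hζ.pow_eq_one, one_pow, sub_self] at h
  exact (mul_eq_zero.mp h).resolve_right hne

theorem sum_neg_one_pow_mul_exp_eq_zero {m j : ℕ} (hj : j < m) (t : ℝ) :
    ∑ k ∈ range (2 * m),
      (-1 : ℂ) ^ k * Complex.exp (↑(j * (t + k * π / m)) * Complex.I) = 0 := by
  have hm : (m : ℂ) ≠ 0 := Nat.cast_ne_zero.mpr (by omega)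
  set ζ := Complex.exp (2 * π * Complex.I / ↑(2 * m))
  have hζ : IsPrimitiveRoot ζ (2 * m) := Complex.isPrimitiveRoot_exp _ (by omega)
  have hterm : ∀ k : ℕ, (-1 : ℂ) ^ k * Complex.exp (↑(j * (t + k * π / m)) * Complex.I)
      = Complex.exp (↑(j * t) * Complex.I) * (ζ ^ (m + j)) ^ k := by
    intro k
    rw [← Complex.exp_pi_mul_I, ← Complex.exp_nat_mul, ← Complex.exp_nat_mul,
      ← Complex.exp_nat_mul, ← Complex.exp_add, ← Complex.exp_add]
    congr 1
    push_cast
    field_simp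
    ring
  have hdvd : ¬ 2 * m ∣ m + j := Nat.not_dvd_of_pos_of_lt (by omega) (by omega)
  rw [sum_congr rfl fun k _ => hterm k, ← mul_sum, hζ.sum_range_pow_pow_eq_zero hdvd, mul_zero]

theorem sum_neg_one_pow_mul_harmonic_eq_zero {m j : ℕ} (hj : j < m) (t a b : ℝ) :
    ∑ k ∈ range (2 * m), (-1 : ℝ) ^ k *
      (a * cos (j * (t + k * π / m)) + b * sin (j * (t + k * π / m))) = 0 := by
  have h := congrArg (fun z => (((a : ℂ) - b * Complex.I) * z).re)
    (sum_neg_one_pow_mul_exp_eq_zero hj t)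
  simp only [mul_sum, Complex.re_sum, mul_zero, Complex.zero_re] at h
  rw [← h]
  refine sum_congr rfl fun k _ => ?_
  rw [mul_left_comm, show (-1 : ℂ) ^ k = ((-1 : ℝ) ^ k : ℝ) by push_cast; rfl,
    Complex.re_ofReal_mul]
  simp only [Complex.mul_re, Complex.mul_im, Complex.sub_re, Complex.sub_im, Complex.ofReal_re,
    Complex.ofReal_im, Complex.I_re, Complex.I_im, Complex.exp_ofReal_mul_I_re,
    Complex.exp_ofReal_mul_I_im]
  ring

theorem sum_neg_one_pow_mul_trig_poly_eq_zero {m : ℕ} (hm : 0 < m) {s : Finset ℕ}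
    (hs : ∀ j ∈ s, j < m) (q₀ : ℝ) (α β : ℕ → ℝ) (t : ℝ) :
    ∑ k ∈ range (2 * m), (-1 : ℝ) ^ k * (q₀ + ∑ j ∈ s,
      (α j * cos (j * (t + k * π / m)) + β j * sin (j * (t + k * π / m)))) = 0 := by
  have hconst := sum_neg_one_pow_mul_harmonic_eq_zero hm t q₀ 0
  simp only [Nat.cast_zero, zero_mul, cos_zero, mul_one, sin_zero, mul_zero, add_zero] at hconst
  calc _ = ∑ k ∈ range (2 * m), (-1 : ℝ) ^ k * q₀ + ∑ j ∈ s, ∑ k ∈ range (2 * m),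
        (-1 : ℝ) ^ k * (α j * cos (j * (t + k * π / m)) + β j * sin (j * (t + k * π / m))) := by
        rw [sum_comm, ← sum_add_distrib]
        exact sum_congr rfl fun k _ => by rw [mul_add, mul_sum]
    _ = 0 := by
        rw [hconst, sum_eq_zero fun j hj => sum_neg_one_pow_mul_harmonic_eq_zero (hs j hj) t _ _,
          add_zero]

theorem mul_sin_arctan_add_mul_cos_arctan {a b : ℝ} (hb : 0 < b) :
    a * sin (arctan (a / b)) + b * cos (arctan (a / b)) = √(a ^ 2 + b ^ 2) := by
  have hr : √(1 + (a / b) ^ 2) = √(a ^ 2 + b ^ 2) / b := by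
    rw [← sqrt_sq hb.le, ← sqrt_div' _ (sq_nonneg b), sqrt_sq hb.le]
    congr 1
    field_simp
    ring
  rw [sin_arctan, cos_arctan, hr]
  field_simp
  rw [sq_sqrt (by positivity)]

theorem sum_sq_le_sum_add_sq_of_sum_mul_eq_zero {ι : Type*} (s : Finset ι) (a c : ι → ℝ)
    (h : ∑ i ∈ s, c i * a i = 0) : ∑ i ∈ s, c i ^ 2 ≤ ∑ i ∈ s, (a i + c i) ^ 2 := by
  have hexpand : ∑ i ∈ s, (a i + c i) ^ 2
      = ∑ i ∈ s, a i ^ 2 + 2 * ∑ i ∈ s, c i * a i + ∑ i ∈ s, c i ^ 2 := by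
    rw [mul_sum, ← sum_add_distrib, ← sum_add_distrib]
    exact sum_congr rfl fun i _ => by ring
  rw [hexpand, h]
  linarith [sum_nonneg fun i (_ : i ∈ s) => sq_nonneg (a i)]

theorem T_criterion_lower_bound_general (m : ℕ) (hm : 1 ≤ m) (b₁ b₂ : ℝ)
    (hb₂ : 0 < b₂) (q : ℝ → ℝ) (q₀ : ℝ) (α β : ℕ → ℝ)
    (hq : ∀ x, q x = q₀ + ∑ j ∈ Finset.Icc 1 (m - 1),
      (α j * Real.cos (j * x) + β j * Real.sin (j * x))) :
    b₁ ^ 2 + b₂ ^ 2 ≤ (1 / (2 * m)) * ∑ i ∈ Finset.Icc 1 (2 * m),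
      (q ((1 / m) * Real.arctan (b₁ / b₂) + ((i : ℝ) - 1) * Real.pi / m)
        + b₁ * Real.sin (m * ((1 / m) * Real.arctan (b₁ / b₂) + ((i : ℝ) - 1) * Real.pi / m))
        + b₂ * Real.cos (m * ((1 / m) * Real.arctan (b₁ / b₂) + ((i : ℝ) - 1) * Real.pi / m))) ^ 2 := by
  have hm0 : (m : ℝ) ≠ 0 := by positivity
  set r := √(b₁ ^ 2 + b₂ ^ 2)
  set x : ℝ → ℝ := fun y => (1 / m) * arctan (b₁ / b₂) + y * π / m with hx
  have hsignal (k : ℕ) : b₁ * sin (m * x k) + b₂ * cos (m * x k) = (-1) ^ k * r := by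
    rw [show (m : ℝ) * x k = arctan (b₁ / b₂) + k * π by simp only [hx]; field_simp,
      sin_add_nat_mul_pi, cos_add_nat_mul_pi]
    linear_combination (-1) ^ k * mul_sin_arctan_add_mul_cos_arctan (a := b₁) hb₂
  have horth : ∑ k ∈ range (2 * m), (-1) ^ k * r * q (x k) = 0 := by
    simp_rw [hq, mul_right_comm _ r, ← sum_mul]
    have hfreq (j : ℕ) (hj : j ∈ Icc 1 (m - 1)) : j < m := by rw [mem_Icc] at hj; omega
    rw [sum_neg_one_pow_mul_trig_poly_eq_zero hm hfreq, zero_mul]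
  have hreindex : ∑ i ∈ Icc 1 (2 * m), (q (x (i - 1)) + b₁ * sin (m * x (i - 1))
        + b₂ * cos (m * x (i - 1))) ^ 2
      = ∑ k ∈ range (2 * m), (q (x k) + (-1) ^ k * r) ^ 2 := by
    rw [← Ico_add_one_right_eq_Icc, sum_Ico_eq_sum_range]
    refine sum_congr (by simp) fun k _ => ?_
    rw [Nat.cast_add, Nat.cast_one, add_sub_cancel_left, add_assoc, hsignal]
  calc b₁ ^ 2 + b₂ ^ 2 = 1 / (2 * m) * ∑ k ∈ range (2 * m), ((-1) ^ k * r) ^ 2 := by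
        have hsq (k : ℕ) : ((-1 : ℝ) ^ k * r) ^ 2 = b₁ ^ 2 + b₂ ^ 2 := by
          rw [mul_pow, ← pow_mul, pow_mul', neg_one_sq, one_pow, one_mul,
            sq_sqrt (by positivity)]
        simp only [hsq, sum_const, card_range, nsmul_eq_mul]
        push_cast
        field_simp
    _ ≤ 1 / (2 * m) * ∑ k ∈ range (2 * m), (q (x k) + (-1) ^ k * r) ^ 2 :=
        mul_le_mul_of_nonneg_left (sum_sq_le_sum_add_sq_of_sum_mul_eq_zero _ _ _ horth)
          (by positivity)
    _ = _ := by rw [← hreindex]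

theorem T_criterion_lower_bound (m : ℕ) (hm : 1 ≤ m) (b₁ b₂ : ℝ)
    (hb₁ : 0 < b₁) (hb₂ : 0 < b₂) (q : ℝ → ℝ) (q₀ : ℝ) (α β : ℕ → ℝ)
    (hq : ∀ x, q x = q₀ + ∑ j ∈ Finset.Icc 1 (m - 1),
      (α j * Real.cos (j * x) + β j * Real.sin (j * x))) :
    b₁ ^ 2 + b₂ ^ 2 ≤ (1 / (2 * m)) * ∑ i ∈ Finset.Icc 1 (2 * m),
      (q ((1 / m) * Real.arctan (b₁ / b₂) + ((i : ℝ) - 1) * Real.pi / m)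
        + b₁ * Real.sin (m * ((1 / m) * Real.arctan (b₁ / b₂) + ((i : ℝ) - 1) * Real.pi / m))
        + b₂ * Real.cos (m * ((1 / m) * Real.arctan (b₁ / b₂) + ((i : ℝ) - 1) * Real.pi / m))) ^ 2 :=
  T_criterion_lower_bound_general m hm b₁ b₂ hb₂ q q₀ α β hq
end

section
/- Let m ≥ 1 be an integer, b₂ ≠ 0 a real number, and consider the points x_k = kπ/m for k = 0, 1, ..., 2m−1. Then for every trigonometric polynomial q of degree at most m−1, (1/(2m)) · ∑_{k=0}^{2m−1} ( q(kπ/m) + b₂ cos(m·kπ/m) )² ≥ b₂². -/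
open Real Finset

/-!
At the nodes `x_k = kπ/m` we have `cos (m x_k) = (-1)^k`, and the sign vector `((-1)^k)` is
orthogonal to every trigonometric polynomial of degree `< m` sampled there: for `0 ≤ j < m`,
`(-1)^k e^{i j x_k} = ζ^{(j+m)k}` with `ζ` a primitive `2m`-th root of unity and `0 < j + m < 2m`,
so the sum over `k` is a vanishing geometric sum. Expanding the square then gives
`∑ (q(x_k) + b₂ (-1)^k)² = ∑ q(x_k)² + 2m b₂² ≥ 2m b₂²`.
-/

theorem geom_sum_eq_zero_of_pow_eq_one {K : Type*} [Field K] {x : K} {n : ℕ} (hx : x ≠ 1)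
    (hxn : x ^ n = 1) : ∑ i ∈ range n, x ^ i = 0 := by
  rw [geom_sum_eq hx, hxn, sub_self, zero_div]

theorem sum_range_neg_one_pow_mul_exp_eq_zero {m j : ℕ} (hj : j < m) :
    ∑ k ∈ range (2 * m), (-1 : ℂ) ^ k * Complex.exp ((j * (k * π / m) : ℝ) * Complex.I) = 0 := by
  have hm : 2 * m ≠ 0 := by omega
  have hm₀ : (m : ℂ) ≠ 0 := Nat.cast_ne_zero.mpr (by omega)
  set ζ := Complex.exp (2 * π * Complex.I / (2 * m : ℕ))
  have hζ : IsPrimitiveRoot ζ (2 * m) := Complex.isPrimitiveRoot_exp _ hm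
  have hterm (k : ℕ) :
      (-1 : ℂ) ^ k * Complex.exp ((j * (k * π / m) : ℝ) * Complex.I) = (ζ ^ (j + m)) ^ k := by
    rw [← Complex.exp_pi_mul_I, ← Complex.exp_nat_mul, ← Complex.exp_add, ← pow_mul,
      ← Complex.exp_nat_mul]
    congr 1
    push_cast
    field_simp
    ring
  simp_rw [hterm]
  refine geom_sum_eq_zero_of_pow_eq_one (hζ.pow_ne_one_of_pos_of_lt (by omega) (by omega)) ?_
  rw [← pow_mul, mul_comm, pow_mul, hζ.pow_eq_one, one_pow]

theorem neg_one_pow_ofReal (k : ℕ) : (-1 : ℂ) ^ k = ((-1 : ℝ) ^ k : ℝ) := by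
  push_cast; rfl

theorem sum_range_neg_one_pow_mul_cos_eq_zero {m j : ℕ} (hj : j < m) :
    ∑ k ∈ range (2 * m), (-1 : ℝ) ^ k * cos (j * (k * π / m)) = 0 := by
  simpa only [Complex.re_sum, neg_one_pow_ofReal, Complex.re_ofReal_mul,
    Complex.exp_ofReal_mul_I_re, Complex.zero_re] using
    congrArg Complex.re (sum_range_neg_one_pow_mul_exp_eq_zero hj)

theorem sum_range_neg_one_pow_mul_sin_eq_zero {m j : ℕ} (hj : j < m) :
    ∑ k ∈ range (2 * m), (-1 : ℝ) ^ k * sin (j * (k * π / m)) = 0 := by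
  simpa only [Complex.im_sum, neg_one_pow_ofReal, Complex.im_ofReal_mul,
    Complex.exp_ofReal_mul_I_im, Complex.zero_im] using
    congrArg Complex.im (sum_range_neg_one_pow_mul_exp_eq_zero hj)

theorem sum_range_neg_one_pow_mul_trigPoly_eq_zero {m : ℕ} (hm : 1 ≤ m) (q : ℝ → ℝ) (q₀ : ℝ)
    (α β : ℕ → ℝ) (hq : ∀ x, q x = q₀ + ∑ j ∈ Icc 1 (m - 1),
      (α j * cos (j * x) + β j * sin (j * x))) :
    ∑ k ∈ range (2 * m), (-1 : ℝ) ^ k * q (k * π / m) = 0 := by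
  have hconst : ∑ k ∈ range (2 * m), (-1 : ℝ) ^ k = 0 := by
    simpa only [CharP.cast_eq_zero, zero_mul, cos_zero, mul_one] using
      sum_range_neg_one_pow_mul_cos_eq_zero (j := 0) hm
  have hharmonic (j : ℕ) (hj : j ∈ Icc 1 (m - 1)) :
      ∑ k ∈ range (2 * m), (-1 : ℝ) ^ k * (α j * cos (j * (k * π / m)) +
        β j * sin (j * (k * π / m))) = 0 := by
    have hjm : j < m := by grind
    simp only [mul_add, mul_left_comm _ (α j), mul_left_comm _ (β j), sum_add_distrib,
      ← mul_sum, sum_range_neg_one_pow_mul_cos_eq_zero hjm,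
      sum_range_neg_one_pow_mul_sin_eq_zero hjm, mul_zero, add_zero]
  have hexpand (k : ℕ) : (-1 : ℝ) ^ k * q (k * π / m) = (-1) ^ k * q₀ +
      ∑ j ∈ Icc 1 (m - 1),
        (-1) ^ k * (α j * cos (j * (k * π / m)) + β j * sin (j * (k * π / m))) := by
    rw [hq, mul_add, mul_sum]
  rw [sum_congr rfl fun k _ => hexpand k, sum_add_distrib, ← sum_mul, hconst, zero_mul, zero_add,
    sum_comm]
  exact sum_eq_zero hharmonic

theorem card_mul_sq_le_sum_sq_add_mul {ι : Type*} (s : Finset ι) (a ε : ι → ℝ) (b : ℝ)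
    (hε : ∀ i ∈ s, ε i ^ 2 = 1) (horth : ∑ i ∈ s, ε i * a i = 0) :
    #s * b ^ 2 ≤ ∑ i ∈ s, (a i + b * ε i) ^ 2 := by
  have hexpand : ∑ i ∈ s, (a i + b * ε i) ^ 2 = ∑ i ∈ s, a i ^ 2 + #s * b ^ 2 := by
    have (i) (hi : i ∈ s) : (a i + b * ε i) ^ 2 = a i ^ 2 + 2 * b * (ε i * a i) + b ^ 2 := by
      linear_combination b ^ 2 * hε i hi
    rw [sum_congr rfl this, sum_add_distrib, sum_add_distrib, ← mul_sum, horth, sum_const,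
      nsmul_eq_mul]
    ring
  rw [hexpand]
  linarith [sum_nonneg fun i (_ : i ∈ s) => sq_nonneg (a i)]

theorem T_criterion_lower_bound_cos_general (m : ℕ) (hm : 1 ≤ m) (b₂ : ℝ)
    (q : ℝ → ℝ) (q₀ : ℝ) (α β : ℕ → ℝ)
    (hq : ∀ x, q x = q₀ + ∑ j ∈ Finset.Icc 1 (m - 1),
      (α j * Real.cos (j * x) + β j * Real.sin (j * x))) :
    b₂ ^ 2 ≤ (1 / (2 * m)) * ∑ k ∈ Finset.range (2 * m),
      (q ((k : ℝ) * Real.pi / m) + b₂ * Real.cos (m * ((k : ℝ) * Real.pi / m))) ^ 2 := by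
  have hm₀ : (m : ℝ) ≠ 0 := Nat.cast_ne_zero.mpr (by omega)
  have hcos (k : ℕ) : cos (m * (k * π / m)) = (-1) ^ k := by
    rw [mul_div_cancel₀ _ hm₀, cos_nat_mul_pi]
  have hbound := card_mul_sq_le_sum_sq_add_mul (range (2 * m)) (fun k => q (k * π / m))
    (fun k => (-1) ^ k) b₂ (fun k _ => by rw [← pow_mul, mul_comm, pow_mul]; norm_num)
    (sum_range_neg_one_pow_mul_trigPoly_eq_zero hm q q₀ α β hq)
  simp only [hcos, card_range] at hbound ⊢
  rw [one_div, le_inv_mul_iff₀ (by positivity)]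
  exact_mod_cast hbound

theorem T_criterion_lower_bound_cos (m : ℕ) (hm : 1 ≤ m) (b₂ : ℝ) (hb₂ : b₂ ≠ 0)
    (q : ℝ → ℝ) (q₀ : ℝ) (α β : ℕ → ℝ)
    (hq : ∀ x, q x = q₀ + ∑ j ∈ Finset.Icc 1 (m - 1),
      (α j * Real.cos (j * x) + β j * Real.sin (j * x))) :
    b₂ ^ 2 ≤ (1 / (2 * m)) * ∑ k ∈ Finset.range (2 * m),
      (q ((k : ℝ) * Real.pi / m) + b₂ * Real.cos (m * ((k : ℝ) * Real.pi / m))) ^ 2 :=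
  T_criterion_lower_bound_cos_general m hm b₂ q q₀ α β hq
end

section
/- Let m ≥ 2 be an integer. Define weights w₁ = 1/(2m) and w_i = (1/m)·cos²((i−1)π/(2m)) for i = 2,...,m. Then for every integer p with 0 ≤ p ≤ m−2, ∑_{i=1}^{m} (−1)^i · w_i · ( cos((i−1)π/m) )^p = 0. -/
/-! Write `x_j = cos (jπ/m)`. Apart from `j = 0`, where it is halved, the weight of `x_j` is
`(1 + x_j)/(2m)`; as `1 + x_m = 0` and `x_{2m-j} = x_j`, the sum is therefore a multiple of the
full alternating sum `∑_{j<2m} (-1)^j (1 + x_j) x_j^p` over the `2m`-th roots of unity `ζ^j`.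
With `(-1)^j = ζ^{mj}` and `2 x_j = ζ^j + ζ^{-j}`, a moment `∑_{j<2m} (-1)^j x_j^k` with `k < m`
expands binomially into geometric sums of `ζ^{m+2l-k}`, `0 ≤ l ≤ k`, and `0 < m+2l-k < 2m`
makes each of them vanish. -/

open Finset Real

theorem IsPrimitiveRoot.geom_sum_zpow_eq_zero {K : Type*} [Field K] {ζ : K} {N : ℕ}
    (hζ : IsPrimitiveRoot ζ N) {n : ℤ} (hn : ¬ (N : ℤ) ∣ n) :
    ∑ j ∈ range N, (ζ ^ n) ^ j = 0 := by
  have hne : ζ ^ n ≠ 1 := mt (hζ.zpow_eq_one_iff_dvd n).1 hn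
  have hpow : (ζ ^ n) ^ N = 1 := by
    rw [← zpow_natCast, ← zpow_mul, mul_comm, zpow_mul, hζ.zpow_eq_one, one_zpow]
  rw [geom_sum_eq hne, hpow, sub_self, zero_div]

theorem IsPrimitiveRoot.sum_pow_mul_add_inv_pow_eq_zero {K : Type*} [Field K] {ζ : K} {N : ℕ}
    (hζ : IsPrimitiveRoot ζ N) (r : ℤ) (k : ℕ)
    (hrk : ∀ l ≤ k, ¬ (N : ℤ) ∣ r + 2 * l - k) :
    ∑ j ∈ range N, (ζ ^ r) ^ j * (ζ ^ j + (ζ ^ j)⁻¹) ^ k = 0 := by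
  rcases N.eq_zero_or_pos with rfl | hN
  · simp
  have hζ0 : ζ ≠ 0 := hζ.ne_zero hN.ne'
  have hterm (j : ℕ) : (ζ ^ r) ^ j * (ζ ^ j + (ζ ^ j)⁻¹) ^ k =
      ∑ l ∈ range (k + 1), (k.choose l : K) * (ζ ^ (r + 2 * l - k)) ^ j := by
    rw [add_pow, mul_sum]
    refine sum_congr rfl fun l hl => ?_
    have hlk : l ≤ k := Nat.lt_succ_iff.mp (mem_range.mp hl)
    simp only [← zpow_natCast, ← zpow_neg, ← zpow_mul]
    rw [← zpow_add₀ hζ0, mul_comm _ (k.choose l : K), mul_left_comm, ← zpow_add₀ hζ0]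
    congr 2
    push_cast [hlk]
    ring
  rw [sum_congr rfl fun j _ => hterm j, sum_comm]
  exact sum_eq_zero fun l hl => by
    rw [← mul_sum, hζ.geom_sum_zpow_eq_zero (hrk l (Nat.lt_succ_iff.mp (mem_range.mp hl))),
      mul_zero]

theorem sum_range_two_mul_neg_one_pow_mul_cos_pow_eq_zero {m k : ℕ} (hk : k < m) :
    ∑ j ∈ range (2 * m), (-1 : ℝ) ^ j * cos (j * π / m) ^ k = 0 := by
  have hm : (m : ℂ) ≠ 0 := by exact_mod_cast (k.zero_le.trans_lt hk).ne'
  set ζ : ℂ := Complex.exp (π * Complex.I / m)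
  have hζ : IsPrimitiveRoot ζ (2 * m) := by
    convert Complex.isPrimitiveRoot_exp (2 * m) (by omega) using 2
    push_cast
    field_simp
  have hζm : ζ ^ m = -1 := by
    rw [← Complex.exp_nat_mul, mul_div_cancel₀ _ hm, Complex.exp_pi_mul_I]
  have hcos (j : ℕ) : 2 * Complex.cos (j * π / m) = ζ ^ j + (ζ ^ j)⁻¹ := by
    rw [Complex.two_cos, ← Complex.exp_nat_mul, ← Complex.exp_neg]
    ring_nf
  have hdvd (l : ℕ) (hl : l ≤ k) : ¬ ((2 * m : ℕ) : ℤ) ∣ (m : ℤ) + 2 * l - k := fun h => by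
    have := Int.le_of_dvd (by omega) h
    omega
  have hsum := hζ.sum_pow_mul_add_inv_pow_eq_zero m k hdvd
  rw [zpow_natCast, hζm] at hsum
  have hsum' :
      ((∑ j ∈ range (2 * m), (-1 : ℝ) ^ j * cos (j * π / m) ^ k : ℝ) : ℂ) * 2 ^ k = 0 := by
    push_cast
    rw [sum_mul, ← hsum]
    refine sum_congr rfl fun j _ => ?_
    rw [← hcos, mul_pow]
    ring
  exact_mod_cast (mul_eq_zero.mp hsum').resolve_right (pow_ne_zero _ two_ne_zero)

theorem sum_range_two_mul_add_eq_of_symm {M : Type*} [AddCommMonoid M] (f : ℕ → M) (m : ℕ)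
    (hf : ∀ j < m, f (m + j) = f (m - j)) :
    ∑ j ∈ range (2 * m), f j + f 0 = 2 • ∑ j ∈ range m, f j + f m := by
  have hreflect : ∑ j ∈ range (m + 1), f (m - j) = ∑ j ∈ range (m + 1), f j := by
    simpa using sum_range_reflect f (m + 1)
  rw [sum_range_succ, sum_range_succ, Nat.sub_self] at hreflect
  rw [two_mul, sum_range_add, sum_congr rfl fun j hj => hf j (mem_range.mp hj), add_assoc,
    hreflect, two_smul, add_assoc]

theorem sum_range_neg_one_pow_mul_one_add_cos_mul_cos_pow_eq_one {m p : ℕ} (hp : p + 2 ≤ m) :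
    ∑ j ∈ range m, (-1 : ℝ) ^ j * ((1 + cos (j * π / m)) * cos (j * π / m) ^ p) = 1 := by
  have hm : (m : ℝ) ≠ 0 := by exact_mod_cast (show 0 < m by omega).ne'
  set g : ℕ → ℝ := fun j => (-1 : ℝ) ^ j * ((1 + cos (j * π / m)) * cos (j * π / m) ^ p)
  have htotal : ∑ j ∈ range (2 * m), g j = 0 := by
    simp only [g, add_mul, one_mul, ← pow_succ', mul_add, sum_add_distrib]
    rw [sum_range_two_mul_neg_one_pow_mul_cos_pow_eq_zero (by omega),
      sum_range_two_mul_neg_one_pow_mul_cos_pow_eq_zero (by omega), add_zero]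
  have hsymm (j : ℕ) (hj : j < m) : g (m + j) = g (m - j) := by
    have hcos : cos (((m + j : ℕ) : ℝ) * π / m) = cos (((m - j : ℕ) : ℝ) * π / m) := by
      rw [Nat.cast_sub hj.le, Nat.cast_add, add_mul, sub_mul, add_div, sub_div,
        mul_div_cancel_left₀ _ hm, add_comm, cos_add_pi, cos_pi_sub]
    have hsign : (-1 : ℝ) ^ (m + j) = (-1) ^ (m - j) := by
      rw [show m + j = m - j + 2 * j by omega, pow_add, pow_mul, neg_one_sq, one_pow, mul_one]
    simp only [g, hcos, hsign]
  have hg0 : g 0 = 2 := by norm_num [g]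
  have hgm : g m = 0 := by simp [g, mul_div_cancel_left₀ _ hm]
  have := sum_range_two_mul_add_eq_of_symm g m hsymm
  rw [htotal, hg0, hgm, two_nsmul] at this
  linarith

theorem chebyshev_alternating_moments (m : ℕ) (hm : 2 ≤ m) (p : ℕ) (hp : p ≤ m - 2) :
    ∑ i ∈ Finset.Icc 1 m, (-1 : ℝ) ^ i *
      (if i = 1 then 1 / (2 * (m : ℝ))
        else (1 / (m : ℝ)) * Real.cos (((i : ℝ) - 1) * Real.pi / (2 * m)) ^ 2) *
      (Real.cos (((i : ℝ) - 1) * Real.pi / m)) ^ p = 0 := by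
  have hterm (j : ℕ) : (-1 : ℝ) ^ (1 + j) *
      (if 1 + j = 1 then 1 / (2 * (m : ℝ))
        else (1 / (m : ℝ)) * cos ((((1 + j : ℕ) : ℝ) - 1) * π / (2 * m)) ^ 2) *
      cos ((((1 + j : ℕ) : ℝ) - 1) * π / m) ^ p =
      -(1 / (2 * m)) * ((-1 : ℝ) ^ j * ((1 + cos (j * π / m)) * cos (j * π / m) ^ p)) +
        if j = 0 then 1 / (2 * m : ℝ) else 0 := by
    rw [show (((1 + j : ℕ) : ℝ) - 1) = j by push_cast; ring]
    rcases j.eq_zero_or_pos with rfl | hj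
    · norm_num
      ring
    · rw [if_neg (by omega), if_neg hj.ne', cos_sq,
        show 2 * ((j : ℝ) * π / (2 * m)) = j * π / m by ring]
      ring
  rw [← Finset.Ico_add_one_right_eq_Icc, sum_Ico_eq_sum_range, Nat.add_sub_cancel,
    sum_congr rfl fun j _ => hterm j, sum_add_distrib, ← mul_sum,
    sum_range_neg_one_pow_mul_one_add_cos_mul_cos_pow_eq_one (by omega), sum_ite_eq',
    if_pos (mem_range.mpr (by omega))]
  ring
end

section
/- Let m ≥ 2 be an integer and c > 0 a real number. Then the following are equivalent: (i) for every integer k with 1 ≤ k ≤ m, the number −(1+c)·cos(kπ/m) − c lies in [−1, 1]; (ii) c ≤ tan²(π/(2m)). Equivalently, writing c = 1/(2m|b|) for b ≠ 0, condition (ii) reads |b| ≥ (1/(2m))·cot²(π/(2m)). -/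
open Real

lemma support_points_aux (c A th : ℝ) (hc : 0 < c) (h : c * (1 + A) ≤ 1 - A)
    (hcosle : th ≤ A) (hcosge : -1 ≤ th) :
    -(1 + c) * th - c ∈ Set.Icc (-1 : ℝ) 1 := by
  rw [Set.mem_Icc]
  constructor
  · nlinarith [mul_le_mul_of_nonneg_left hcosle (by linarith : (0:ℝ) ≤ 1 + c)]
  · nlinarith [mul_nonneg (by linarith : (0:ℝ) ≤ 1 + c) (by linarith : (0:ℝ) ≤ th + 1)]

theorem support_points_well_defined_iff (m : ℕ) (hm : 2 ≤ m) (c : ℝ) (hc : 0 < c) :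
    ((∀ k : ℕ, 1 ≤ k → k ≤ m →
        -(1 + c) * Real.cos ((k : ℝ) * Real.pi / m) - c ∈ Set.Icc (-1 : ℝ) 1)
      ↔ c ≤ Real.tan (Real.pi / (2 * m)) ^ 2) ∧
    (∀ b : ℝ, b ≠ 0 → c = 1 / (2 * m * |b|) →
      (c ≤ Real.tan (Real.pi / (2 * m)) ^ 2 ↔
        (1 / (2 * m)) * Real.cot (Real.pi / (2 * m)) ^ 2 ≤ |b|)) := by
  have hpi := Real.pi_pos
  have hm1 : (1:ℝ) ≤ m := by exact_mod_cast Nat.one_le_of_lt hm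
  have hm2 : (2:ℝ) ≤ m := by exact_mod_cast hm
  have hm0 : (0:ℝ) < m := by linarith
  set x := Real.pi / (2 * m) with hx
  have hx0 : 0 < x := by positivity
  have hxlt : x < Real.pi / 2 := by
    rw [hx, div_lt_div_iff₀ (by positivity) (by norm_num)]
    nlinarith
  have hcosx : 0 < Real.cos x := Real.cos_pos_of_mem_Ioo ⟨by linarith, hxlt⟩
  have hsinx : 0 < Real.sin x := Real.sin_pos_of_pos_of_lt_pi hx0 (by linarith)
  have htanx : 0 < Real.tan x := Real.tan_pos_of_pos_of_lt_pi_div_two hx0 hxlt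
  have hα : 2 * x = Real.pi / m := by rw [hx]; ring
  set A := Real.cos (Real.pi / m) with hA
  have hcos2 : Real.cos x ^ 2 = (1 + A) / 2 := by
    rw [hA, ← hα, Real.cos_sq]; ring
  have hsin2 : Real.sin x ^ 2 = (1 - A) / 2 := by
    have := Real.sin_sq_add_cos_sq x
    linarith [hcos2]
  have h1A : 0 < 1 + A := by nlinarith
  have htan2 : Real.tan x ^ 2 = (1 - A) / (1 + A) := by
    rw [Real.tan_eq_sin_div_cos, div_pow, hsin2, hcos2]
    field_simp
  clear_value x A
  constructor
  · constructor
    · intro h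
      have h1 := (h 1 le_rfl (by omega)).1
      push_cast at h1
      rw [one_mul] at h1
      rw [htan2, le_div_iff₀ h1A]
      nlinarith
    · intro h k hk1 hkm
      have hk1' : (1:ℝ) ≤ k := by exact_mod_cast hk1
      have hkm' : (k:ℝ) ≤ m := by exact_mod_cast hkm
      have hθ1 : Real.pi / m ≤ (k:ℝ) * Real.pi / m := by
        rw [div_le_div_iff₀ hm0 hm0]
        nlinarith [mul_nonneg (mul_nonneg (by linarith : (0:ℝ) ≤ (k:ℝ) - 1) hpi.le) hm0.le]
      have hθ2 : (k:ℝ) * Real.pi / m ≤ Real.pi := by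
        rw [div_le_iff₀ hm0]; nlinarith
      have hcosle : Real.cos ((k:ℝ) * Real.pi / m) ≤ A := by
        rw [hA]
        exact Real.cos_le_cos_of_nonneg_of_le_pi (by positivity) hθ2 hθ1
      have hcosge : -1 ≤ Real.cos ((k:ℝ) * Real.pi / m) := Real.neg_one_le_cos _
      rw [htan2, le_div_iff₀ h1A] at h
      exact support_points_aux c A _ hc (by nlinarith) hcosle hcosge
  · intro b hb hcb
    have hb0 : 0 < |b| := abs_pos.mpr hb
    have hcot : Real.cot x = 1 / Real.tan x := by
      rw [Real.cot_eq_cos_div_sin, Real.tan_eq_sin_div_cos]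
      field_simp
    rw [hcb, hcot]
    have he : (1 / (2 * (m:ℝ))) * (1 / Real.tan x) ^ 2 = 1 / (2 * m * Real.tan x ^ 2) := by
      field_simp
    rw [he, div_le_iff₀ (by positivity), div_le_iff₀ (by positivity),
      show |b| * (2 * (m:ℝ) * Real.tan x ^ 2) = Real.tan x ^ 2 * (2 * m * |b|) by ring]
end

section
/- Let m ≥ 2 be an integer and c > 0 a real number. Then there exist real numbers a₀, a₁, ..., a_{m−2} such that for every real x, (−1)^m · (1+c)^m · T_m( (−cos x − c)/(1+c) ) = ∑_{j=0}^{m−2} a_j cos(jx) + 2mc·cos((m−1)x) + cos(mx). -/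
/-! Write `f m x = (-1)^m (1+c)^m T_m((-cos x - c)/(1+c))`. The Chebyshev recurrence
`T (m+2) = 2 X T (m+1) - T m` becomes `f (m+2) = 2 (cos x + c) f (m+1) - (1+c)^2 f m`.
Since `2 cos x cos (j x) = cos ((j+1) x) + cos ((j-1) x)`, multiplying by `cos x` raises the
cosine degree by one, so `f m` has cosine degree `m`; following the two top coefficients through
the recurrence, the coefficient of `cos (m x)` stays `1` and that of `cos ((m-1) x)` grows by
`2c` at each step. -/

open Real Polynomial

noncomputable def cosineSpan (n : ℕ) : Submodule ℝ (ℝ → ℝ) :=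
  Submodule.span ℝ (Set.range fun j : Fin n => fun x => cos (j * x))

theorem cos_nat_mul_mem_cosineSpan {j n : ℕ} (h : j < n) :
    (fun x => cos (j * x)) ∈ cosineSpan n :=
  Submodule.subset_span ⟨⟨j, h⟩, rfl⟩

theorem const_mem_cosineSpan {n : ℕ} (hn : 0 < n) (r : ℝ) : (fun _ => r) ∈ cosineSpan n := by
  convert Submodule.smul_mem _ r (cos_nat_mul_mem_cosineSpan hn) using 1
  ext x; simp

theorem cosineSpan_mono : Monotone cosineSpan := fun _ _ hmn =>
  Submodule.span_mono <| Set.range_subset_iff.mpr fun j =>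
    ⟨Fin.castLE hmn j, rfl⟩

theorem two_mul_cos_mul_cos_mul (a x : ℝ) :
    2 * cos x * cos (a * x) = cos ((a + 1) * x) + cos ((a - 1) * x) := by
  rw [add_mul, sub_mul, one_mul, cos_add, cos_sub]; ring

theorem cos_mul_mem_cosineSpan {n : ℕ} {g : ℝ → ℝ} (hg : g ∈ cosineSpan n) :
    (fun x => cos x * g x) ∈ cosineSpan (n + 1) := by
  let mulCos := LinearMap.mulLeft ℝ (cos : ℝ → ℝ)
  suffices cosineSpan n ≤ (cosineSpan (n + 1)).comap mulCos from this hg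
  refine Submodule.span_le.mpr <| Set.range_subset_iff.mpr fun ⟨j, hj⟩ => ?_
  show (fun x => cos x * cos (j * x)) ∈ cosineSpan (n + 1)
  rcases j with _ | i
  · simpa using cos_nat_mul_mem_cosineSpan (Nat.succ_lt_succ hj)
  · have h : (fun x => cos x * cos ((i + 1 : ℕ) * x))
        = (1 / 2 : ℝ) • (fun x => cos ((i + 2 : ℕ) * x))
          + (1 / 2 : ℝ) • fun x => cos (i * x) := by
      ext x
      have := two_mul_cos_mul_cos_mul ((i + 1 : ℕ)) x
      simp only [Pi.add_apply, Pi.smul_apply, smul_eq_mul]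
      push_cast at this ⊢
      ring_nf at this ⊢
      linarith
    rw [h]
    exact add_mem (Submodule.smul_mem _ _ (cos_nat_mul_mem_cosineSpan (by omega)))
      (Submodule.smul_mem _ _ (cos_nat_mul_mem_cosineSpan (by omega)))

theorem exists_sum_cos_of_mem_cosineSpan {n : ℕ} {g : ℝ → ℝ} (hg : g ∈ cosineSpan n) :
    ∃ a : ℕ → ℝ, ∀ x, g x = ∑ j ∈ Finset.range n, a j * cos (j * x) := by
  obtain ⟨b, rfl⟩ := Submodule.mem_span_range_iff_exists_fun ℝ |>.mp hg
  refine ⟨fun j => if h : j < n then b ⟨j, h⟩ else 0, fun x => ?_⟩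
  rw [Finset.sum_range]
  simp

noncomputable def shiftedChebyshev (c : ℝ) (m : ℕ) (x : ℝ) : ℝ :=
  (-1) ^ m * (1 + c) ^ m * (Chebyshev.T ℝ m).eval ((-cos x - c) / (1 + c))

section shiftedChebyshev

variable {c : ℝ}

theorem shiftedChebyshev_zero : shiftedChebyshev c 0 = fun _ => 1 := by
  ext x; simp [shiftedChebyshev]

theorem shiftedChebyshev_one (hc : 1 + c ≠ 0) (x : ℝ) : shiftedChebyshev c 1 x = cos x + c := by
  simp only [shiftedChebyshev, Nat.cast_one, Chebyshev.T_one, eval_X]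
  field_simp
  ring

theorem shiftedChebyshev_add_two (hc : 1 + c ≠ 0) (m : ℕ) (x : ℝ) :
    shiftedChebyshev c (m + 2) x
      = 2 * (cos x + c) * shiftedChebyshev c (m + 1) x - (1 + c) ^ 2 * shiftedChebyshev c m x := by
  simp only [shiftedChebyshev, Nat.cast_add, Nat.cast_ofNat, Nat.cast_one, Chebyshev.T_add_two,
    eval_sub, eval_mul, eval_ofNat, eval_X]
  field_simp
  ring

theorem shiftedChebyshev_mem_cosineSpan (hc : 1 + c ≠ 0) (m : ℕ) :
    shiftedChebyshev c m ∈ cosineSpan (m + 1) := by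
  induction m using Nat.twoStepInduction with
  | zero => rw [shiftedChebyshev_zero]; exact const_mem_cosineSpan one_pos 1
  | one =>
    have h : shiftedChebyshev c 1 = (fun x => cos ((1 : ℕ) * x)) + fun _ => c := by
      ext x; simp [shiftedChebyshev_one hc]
    rw [h]
    exact add_mem (cos_nat_mul_mem_cosineSpan one_lt_two) (const_mem_cosineSpan two_pos c)
  | more m ih₀ ih₁ =>
    have h : shiftedChebyshev c (m + 2)
        = (2 : ℝ) • (fun x => cos x * shiftedChebyshev c (m + 1) x)
          + (2 * c) • shiftedChebyshev c (m + 1)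
          - (1 + c) ^ 2 • shiftedChebyshev c m := by
      ext x
      simp only [shiftedChebyshev_add_two hc, Pi.add_apply, Pi.sub_apply, Pi.smul_apply,
        smul_eq_mul]
      ring
    rw [h]
    refine sub_mem (add_mem (Submodule.smul_mem _ _ (cos_mul_mem_cosineSpan ih₁))
      (Submodule.smul_mem _ _ (cosineSpan_mono (by omega) ih₁)))
      (Submodule.smul_mem _ _ (cosineSpan_mono (by omega) ih₀))

-- Indexed by `k = m - 2`: the analogous claim fails for `m = 1`, where
-- `shiftedChebyshev c 1 x = cos x + c` rather than `2c + cos x`.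
theorem shiftedChebyshev_sub_leading_mem_cosineSpan (hc : 1 + c ≠ 0) (k : ℕ) :
    (fun x => shiftedChebyshev c (k + 2) x
      - 2 * ((k + 2 : ℕ) : ℝ) * c * cos (((k + 1 : ℕ) : ℝ) * x)
      - cos (((k + 2 : ℕ) : ℝ) * x))
      ∈ cosineSpan (k + 1) := by
  induction k with
  | zero =>
    have h : ∀ x, shiftedChebyshev c 2 x - 2 * 2 * c * cos x - cos (2 * x) = c ^ 2 - 2 * c :=
      fun x => by
        rw [shiftedChebyshev_add_two hc, shiftedChebyshev_one hc, shiftedChebyshev_zero,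
          cos_two_mul]
        ring
    simpa [h] using const_mem_cosineSpan one_pos (c ^ 2 - 2 * c)
  | succ k ih =>
    set g := fun x => shiftedChebyshev c (k + 2) x
      - 2 * ((k + 2 : ℕ) : ℝ) * c * cos (((k + 1 : ℕ) : ℝ) * x)
      - cos (((k + 2 : ℕ) : ℝ) * x)
    have h : (fun x => shiftedChebyshev c (k + 1 + 2) x
        - 2 * ((k + 1 + 2 : ℕ) : ℝ) * c * cos (((k + 1 + 1 : ℕ) : ℝ) * x)
        - cos (((k + 1 + 2 : ℕ) : ℝ) * x))
        = (2 : ℝ) • (fun x => cos x * g x) + (2 * c) • g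
          + (2 * ((k + 2 : ℕ) : ℝ) * c) • (fun x => cos ((k : ℕ) * x))
          + (1 + 4 * ((k + 2 : ℕ) : ℝ) * c ^ 2) • (fun x => cos (((k + 1 : ℕ) : ℝ) * x))
          - (1 + c) ^ 2 • shiftedChebyshev c (k + 1) := by
      ext x
      have h₁ := two_mul_cos_mul_cos_mul (((k + 2 : ℕ) : ℝ)) x
      have h₂ := two_mul_cos_mul_cos_mul (((k + 1 : ℕ) : ℝ)) x
      simp only [g, Pi.add_apply, Pi.sub_apply, Pi.smul_apply, smul_eq_mul,
        shiftedChebyshev_add_two hc (k + 1)]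
      push_cast at h₁ h₂ ⊢
      ring_nf at h₁ h₂ ⊢
      linear_combination h₁ + 2 * (k + 2) * c * h₂
    rw [h]
    exact sub_mem (add_mem (add_mem (add_mem
      (Submodule.smul_mem _ _ (cos_mul_mem_cosineSpan ih))
      (Submodule.smul_mem _ _ (cosineSpan_mono (by omega) ih)))
      (Submodule.smul_mem _ _ (cos_nat_mul_mem_cosineSpan (by omega))))
      (Submodule.smul_mem _ _ (cos_nat_mul_mem_cosineSpan (by omega))))
      (Submodule.smul_mem _ _ (shiftedChebyshev_mem_cosineSpan hc (k + 1)))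

end shiftedChebyshev

theorem chebyshev_composition_cosine_expansion (m : ℕ) (hm : 2 ≤ m) (c : ℝ) (hc : 0 < c) :
    ∃ a : ℕ → ℝ, ∀ x : ℝ,
      (-1 : ℝ) ^ m * (1 + c) ^ m *
          (Polynomial.Chebyshev.T ℝ (m : ℤ)).eval ((-Real.cos x - c) / (1 + c))
        = (∑ j ∈ Finset.range (m - 1), a j * Real.cos ((j : ℝ) * x))
          + 2 * m * c * Real.cos (((m : ℝ) - 1) * x) + Real.cos ((m : ℝ) * x) := by
  obtain ⟨k, rfl⟩ := Nat.exists_eq_add_of_le' hm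
  obtain ⟨a, ha⟩ := exists_sum_cos_of_mem_cosineSpan
    (shiftedChebyshev_sub_leading_mem_cosineSpan (by linarith : 1 + c ≠ 0) k)
  refine ⟨a, fun x => ?_⟩
  rw [show k + 2 - 1 = k + 1 by omega, ← ha x, shiftedChebyshev]
  push_cast
  ring_nf
end
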